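/- Let d > 1, p ∈ (1,∞), s ∈ (0,1), and let D ⊂ ℝ^d be an open set with nonempty complement which admits the Hardy-type inequality: there is a constant c_H such that ∫_D |u(x)|^p / dist(x, D^c)^{sp} dx ≤ c_H |u|_{X^{s,p}(D)}^p for all u ∈ (C^1_c(D))^d. Assume also the whole-space fractional Korn inequality: |v|_{W^{s,p}(ℝ^d)}^p ≤ C_K |v|_{X^{s,p}(ℝ^d)}^p for all v ∈ (C^1_c(ℝ^d))^d (and for compactly supported v with finite seminorms). Then there exists a constant C ≥ 1 such that C |u|_{X^{s,p}(D)} ≥ |u|_{W^{s,p}(D)} for every u ∈ (C^1_c(D))^d. -/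

import Mathlib

open MeasureTheory ENNReal NNReal RealInnerProductSpace Filter

noncomputable section

abbrev Euc (d : ℕ) : Type := EuclideanSpace ℝ (Fin d)

/-- `∫_D ‖u‖^p` as an extended nonnegative real. -/
def lpIntP (d : ℕ) (p : ℝ) (D : Set (Euc d)) (u : Euc d → Euc d) : ℝ≥0∞ :=
  ∫⁻ x in D, (‖u x‖₊ : ℝ≥0∞) ^ p

/-- The `p`-th power of the fractional Sobolev (Gagliardo) seminorm `|u|_{W^{s,p}(D)}`. -/
def wSemiP (d : ℕ) (s p : ℝ) (D : Set (Euc d)) (u : Euc d → Euc d) : ℝ≥0∞ :=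
  ∫⁻ x in D, ∫⁻ y in D,
    (‖u x - u y‖₊ : ℝ≥0∞) ^ p / (‖x - y‖₊ : ℝ≥0∞) ^ ((d : ℝ) + s * p)

/-- The `p`-th power of the projected seminorm `|u|_{X^{s,p}(D)}`. -/
def xSemiP (d : ℕ) (s p : ℝ) (D : Set (Euc d)) (u : Euc d → Euc d) : ℝ≥0∞ :=
  ∫⁻ x in D, ∫⁻ y in D,
    ENNReal.ofReal (|(inner ℝ (u x - u y) (x - y) : ℝ)| / ‖x - y‖) ^ p
      / (‖x - y‖₊ : ℝ≥0∞) ^ ((d : ℝ) + s * p)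

/-- The norm `‖u‖_{W^{s,p}(D)}`. -/
def wNorm (d : ℕ) (s p : ℝ) (D : Set (Euc d)) (u : Euc d → Euc d) : ℝ≥0∞ :=
  (lpIntP d p D u + wSemiP d s p D u) ^ (1 / p)

/-- The norm `‖u‖_{X^{s,p}(D)}`. -/
def xNorm (d : ℕ) (s p : ℝ) (D : Set (Euc d)) (u : Euc d → Euc d) : ℝ≥0∞ :=
  (lpIntP d p D u + xSemiP d s p D u) ^ (1 / p)

/-- The class `(C^1_c(D))^d` of continuously differentiable vector fields compactly
supported in `D` (viewed as functions on all of `ℝ^d`, extended by zero). -/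
def C1c (d : ℕ) (D : Set (Euc d)) : Set (Euc d → Euc d) :=
  {u | ContDiff ℝ 1 u ∧ HasCompactSupport u ∧ tsupport u ⊆ D}

/-- `W_0^{s,p}(D)`: the closure of `(C^1_c(D))^d` in the norm `‖·‖_{W^{s,p}(D)}`. -/
def W0 (d : ℕ) (s p : ℝ) (D : Set (Euc d)) : Set (Euc d → Euc d) :=
  {u | Measurable u ∧ wNorm d s p D u ≠ ⊤ ∧
    ∃ v : ℕ → Euc d → Euc d, (∀ n, v n ∈ C1c d D) ∧
      Tendsto (fun n => wNorm d s p D (v n - u)) atTop (nhds 0)}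

/-- `X_0^{s,p}(D)`: the closure of `(C^1_c(D))^d` in the norm `‖·‖_{X^{s,p}(D)}`. -/
def X0 (d : ℕ) (s p : ℝ) (D : Set (Euc d)) : Set (Euc d → Euc d) :=
  {u | Measurable u ∧ xNorm d s p D u ≠ ⊤ ∧
    ∃ v : ℕ → Euc d → Euc d, (∀ n, v n ∈ C1c d D) ∧
      Tendsto (fun n => xNorm d s p D (v n - u)) atTop (nhds 0)}

/-- The first `d-1` coordinates `x'` of a point `x ∈ ℝ^d`. -/
def proj' (d : ℕ) (x : Euc d) : Euc (d - 1) :=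
  WithLp.toLp 2 fun i => x (Fin.castLE (Nat.sub_le d 1) i)

/-- The epigraph `{(x', x_d) : x_d > f(x')}` of `f : ℝ^{d-1} → ℝ`. -/
def epigraph (d : ℕ) (hd : 0 < d) (f : Euc (d - 1) → ℝ) : Set (Euc d) :=
  {x | f (proj' d x) < x ⟨d - 1, Nat.sub_lt hd Nat.one_pos⟩}

/-- The upper half-space `ℝ^d_+`. -/
def halfSpace (d : ℕ) (hd : 0 < d) : Set (Euc d) :=
  {x | 0 < x ⟨d - 1, Nat.sub_lt hd Nat.one_pos⟩}

/-- `D` is a Lipschitz open set with constant `L`. -/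
def IsLipschitzSet (d : ℕ) (hd : 0 < d) (L : ℝ) (D : Set (Euc d)) : Prop :=
  ∃ (n : ℕ) (z : Fin n → Euc d) (r : Fin n → ℝ)
    (f : Fin n → Euc (d - 1) → ℝ) (R : Fin n → (Euc d ≃ᵢ Euc d)),
    (∀ i, z i ∈ frontier D) ∧ (∀ i, 0 < r i) ∧
    (∀ i, LipschitzWith (Real.toNNReal L) (f i)) ∧
    frontier D ⊆ ⋃ i, Metric.ball (z i) (r i) ∧
    (∀ i, R i '' (Metric.ball (z i) (r i) ∩ D) ⊆ epigraph d hd (f i)) ∧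
    (∀ i, R i '' (Metric.ball (z i) (r i) ∩ frontier D)
        = R i '' Metric.ball (z i) (r i) ∩ frontier (epigraph d hd (f i)))

/-- `D` is a `C^1` open set. -/
def IsC1Set (d : ℕ) (hd : 0 < d) (D : Set (Euc d)) : Prop :=
  ∃ (n : ℕ) (z : Fin n → Euc d) (r : Fin n → ℝ)
    (f : Fin n → Euc (d - 1) → ℝ) (R : Fin n → (Euc d ≃ᵢ Euc d)),
    (∀ i, z i ∈ frontier D) ∧ (∀ i, 0 < r i) ∧
    (∀ i, ContDiff ℝ 1 (f i)) ∧
    frontier D ⊆ ⋃ i, Metric.ball (z i) (r i) ∧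
    (∀ i, R i '' (Metric.ball (z i) (r i) ∩ D) ⊆ epigraph d hd (f i)) ∧
    (∀ i, R i '' (Metric.ball (z i) (r i) ∩ frontier D)
        = R i '' Metric.ball (z i) (r i) ∩ frontier (epigraph d hd (f i)))

/-- The constant `C(L) = √(1 + L(L+1))`. -/
def CL (L : ℝ) : ℝ := Real.sqrt (1 + L * (L + 1))

/-- The graph-flattening map `T(x', x_d) = (x', x_d - f(x'))`. -/
def flatten (d : ℕ) (f : Euc (d - 1) → ℝ) (x : Euc d) : Euc d :=
  WithLp.toLp 2 fun i => if (i : ℕ) = d - 1 then x i - f (proj' d x) else x i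

/-- The inverse map `T⁻¹(w', w_d) = (w', w_d + f(w'))`. -/
def shiftGraph (d : ℕ) (f : Euc (d - 1) → ℝ) (w : Euc d) : Euc d :=
  WithLp.toLp 2 fun i => if (i : ℕ) = d - 1 then w i + f (proj' d w) else w i

/-- The `p`-th power of the fractional Sobolev seminorm of a scalar function. -/
def wSemiPScalar (d : ℕ) (s p : ℝ) (D : Set (Euc d)) (g : Euc d → ℝ) : ℝ≥0∞ :=
  ∫⁻ x in D, ∫⁻ y in D,
    (‖g x - g y‖₊ : ℝ≥0∞) ^ p / (‖x - y‖₊ : ℝ≥0∞) ^ ((d : ℝ) + s * p)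

/-- `B_δ = {x ∈ B : dist(x, ∂B) > δ}`. -/
def innerSet (d : ℕ) (δ : ℝ) (B : Set (Euc d)) : Set (Euc d) :=
  {x ∈ B | δ < Metric.infDist x (frontier B)}

/-! Extend `u` by zero. Since `u` vanishes off `D`, the projected seminorm over `ℝ^d` is the
one over `D` plus twice the cross term `∫_D ∫_{Dᶜ}`. For `x ∈ D` and `y ∉ D` the projected kernel
is at most `|u(x)|^p |x - y|^{-d-sp}`, and `Dᶜ` lies outside the ball of radius
`δ = dist(x, Dᶜ)` about `x`, where this kernel integrates, by scaling, to a constant times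
`|u(x)|^p δ^{-sp}`. The Hardy inequality bounds the resulting integral by `|u|_{X^{s,p}(D)}^p`,
so `|u|_{X^{s,p}(ℝ^d)} ≲ |u|_{X^{s,p}(D)}`, and the whole-space Korn inequality together with
`|u|_{W^{s,p}(D)} ≤ |u|_{W^{s,p}(ℝ^d)}` concludes. -/

open Metric Module Set Function

section HaarTail

variable {E : Type*} [NormedAddCommGroup E] [NormedSpace ℝ E] [FiniteDimensional ℝ E]
  [MeasurableSpace E] [BorelSpace E] (μ : Measure E) [μ.IsAddHaarMeasure]

theorem lintegral_comp_smul_of_pos {δ : ℝ} (hδ : 0 < δ) (g : E → ℝ≥0∞) :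
    ∫⁻ w, g (δ • w) ∂μ = ENNReal.ofReal δ ^ (-(finrank ℝ E : ℝ)) * ∫⁻ z, g z ∂μ := by
  let e : E ≃ₜ E := Homeomorph.smul (isUnit_iff_ne_zero.2 hδ.ne').unit
  have he : ⇑e.toMeasurableEquiv = (δ • ·) := rfl
  refine (lintegral_map_equiv g e.toMeasurableEquiv).symm.trans ?_
  rw [he, Measure.map_addHaar_smul μ hδ.ne', lintegral_smul_measure, smul_eq_mul,
    abs_of_pos (by positivity), ENNReal.ofReal_rpow_of_pos hδ, Real.rpow_neg hδ.le,
    Real.rpow_natCast]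

theorem lintegral_compl_ball_enorm_rpow_neg {r δ : ℝ} (hδ : 0 < δ) :
    ∫⁻ z in (ball 0 δ)ᶜ, ‖z‖ₑ ^ (-r) ∂μ =
      ENNReal.ofReal δ ^ ((finrank ℝ E : ℝ) - r) * ∫⁻ z in (ball 0 1)ᶜ, ‖z‖ₑ ^ (-r) ∂μ := by
  have hball : ∀ w : E, δ • w ∈ ball (0 : E) δ ↔ w ∈ ball (0 : E) 1 := fun w => by
    simp [norm_smul, abs_of_pos hδ, hδ]
  have hscale : ∀ w : E, ‖δ • w‖ₑ ^ (-r) = ENNReal.ofReal δ ^ (-r) * ‖w‖ₑ ^ (-r) := fun w => by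
    rw [enorm_smul, Real.enorm_of_nonneg hδ.le,
      ENNReal.mul_rpow_of_ne_top ofReal_ne_top enorm_ne_top]
  have hδE :
      ENNReal.ofReal δ ^ (finrank ℝ E : ℝ) * ENNReal.ofReal δ ^ (-(finrank ℝ E : ℝ)) = 1 := by
    rw [← ENNReal.rpow_add _ _ (by simpa using hδ) ofReal_ne_top, add_neg_cancel,
      ENNReal.rpow_zero]
  have hcomp : ∫⁻ w, (ball (0 : E) δ)ᶜ.indicator (‖·‖ₑ ^ (-r)) (δ • w) ∂μ =
      ENNReal.ofReal δ ^ (-r) * ∫⁻ z in (ball 0 1)ᶜ, ‖z‖ₑ ^ (-r) ∂μ := by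
    rw [← lintegral_const_mul' _ _ (by simp [hδ]), ← lintegral_indicator measurableSet_ball.compl]
    congr 1 with w
    by_cases hw : w ∈ ball (0 : E) 1
    · simp [hw, hball]
    · simp [hw, hball, hscale]
  rw [← lintegral_indicator measurableSet_ball.compl, ← one_mul (lintegral _ _), ← hδE, mul_assoc,
    ← lintegral_comp_smul_of_pos μ hδ, hcomp, ← mul_assoc,
    ← ENNReal.rpow_add _ _ (by simpa using hδ) ofReal_ne_top, sub_eq_add_neg]

theorem lintegral_compl_ball_enorm_sub_rpow_neg (x : E) {r δ : ℝ} (hδ : 0 < δ) :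
    ∫⁻ y in (ball x δ)ᶜ, ‖x - y‖ₑ ^ (-r) ∂μ =
      ENNReal.ofReal δ ^ ((finrank ℝ E : ℝ) - r) * ∫⁻ z in (ball 0 1)ᶜ, ‖z‖ₑ ^ (-r) ∂μ := by
  rw [← lintegral_compl_ball_enorm_rpow_neg μ hδ, ← lintegral_indicator measurableSet_ball.compl,
    ← lintegral_indicator measurableSet_ball.compl,
    ← lintegral_sub_right_eq_self (fun z => (ball (0 : E) δ)ᶜ.indicator (‖·‖ₑ ^ (-r)) z) x]
  congr 1 with y
  have hy : y ∈ ball x δ ↔ y - x ∈ ball (0 : E) δ := by simp [dist_eq_norm]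
  by_cases h : y ∈ ball x δ
  · simp [h, hy.mp h]
  · simp [h, mt hy.mpr h, enorm_sub_rev]

theorem lintegral_compl_ball_one_enorm_rpow_neg_lt_top {r : ℝ} (hr : (finrank ℝ E : ℝ) < r) :
    ∫⁻ z in (ball 0 1)ᶜ, ‖z‖ₑ ^ (-r) ∂μ < ⊤ := by
  have hbound : ∀ z ∈ (ball (0 : E) 1)ᶜ,
      ‖z‖ₑ ^ (-r) ≤ ENNReal.ofReal (2 ^ r) * ‖(1 + ‖z‖) ^ (-r)‖ₑ := fun z hz => by
    have hz1 : 1 ≤ ‖z‖ := by simpa using hz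
    have hr0 : 0 ≤ r := (Nat.cast_nonneg _).trans hr.le
    rw [← ofReal_norm, ENNReal.ofReal_rpow_of_pos (by linarith),
      Real.enorm_of_nonneg (by positivity), ← ENNReal.ofReal_mul (by positivity)]
    refine ENNReal.ofReal_le_ofReal ?_
    calc ‖z‖ ^ (-r) = 2 ^ r * (2 * ‖z‖) ^ (-r) := by
          rw [Real.mul_rpow (by norm_num) (by positivity), Real.rpow_neg (by norm_num : (0:ℝ) ≤ 2),
            ← mul_assoc, mul_inv_cancel₀ (by positivity), one_mul]
      _ ≤ 2 ^ r * (1 + ‖z‖) ^ (-r) := mul_le_mul_of_nonneg_left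
          (Real.rpow_le_rpow_of_nonpos (by positivity) (by linarith) (by linarith)) (by positivity)
  calc ∫⁻ z in (ball 0 1)ᶜ, ‖z‖ₑ ^ (-r) ∂μ
      ≤ ∫⁻ z in (ball 0 1)ᶜ, ENNReal.ofReal (2 ^ r) * ‖(1 + ‖z‖) ^ (-r)‖ₑ ∂μ :=
        setLIntegral_mono' measurableSet_ball.compl hbound
    _ ≤ ∫⁻ z, ENNReal.ofReal (2 ^ r) * ‖(1 + ‖z‖) ^ (-r)‖ₑ ∂μ := setLIntegral_le_lintegral _ _
    _ < ⊤ := by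
        rw [lintegral_const_mul' _ _ ofReal_ne_top]
        exact ENNReal.mul_lt_top ofReal_lt_top (integrable_one_add_norm hr).2

end HaarTail

theorem lintegral_lintegral_eq_add_two_mul_of_symm {α : Type*} [MeasurableSpace α]
    {μ : Measure α} [SFinite μ] {f : α → α → ℝ≥0∞} (hf : Measurable (uncurry f))
    (hsymm : ∀ x y, f x y = f y x) {T : Set α} (hT : MeasurableSet T)
    (hzero : ∀ x ∉ T, ∀ y ∉ T, f x y = 0) :
    ∫⁻ x, ∫⁻ y, f x y ∂μ ∂μ =
      ∫⁻ x in T, ∫⁻ y in T, f x y ∂μ ∂μ + 2 * ∫⁻ x in T, ∫⁻ y in Tᶜ, f x y ∂μ ∂μ := by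
  have hsplit : ∀ x, ∫⁻ y, f x y ∂μ = ∫⁻ y in T, f x y ∂μ + ∫⁻ y in Tᶜ, f x y ∂μ :=
    fun x => (lintegral_add_compl (f x) hT).symm
  have houter : ∀ x ∈ Tᶜ, ∫⁻ y, f x y ∂μ = ∫⁻ y in T, f y x ∂μ := fun x hx => by
    rw [hsplit, setLIntegral_congr_fun hT.compl (fun y hy => hzero x hx y hy), lintegral_zero,
      add_zero]
    exact lintegral_congr fun y => hsymm x y
  have hmeas : Measurable fun x => ∫⁻ y in T, f x y ∂μ := hf.lintegral_prod_right'
  rw [← lintegral_add_compl _ hT, setLIntegral_congr_fun hT.compl houter,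
    lintegral_lintegral_swap (f := fun x y => f y x) (hf.comp measurable_swap).aemeasurable,
    lintegral_congr hsplit, lintegral_add_left hmeas]
  ring

def projKernel (d : ℕ) (s p : ℝ) (u : Euc d → Euc d) (x y : Euc d) : ℝ≥0∞ :=
  ENNReal.ofReal (|(inner ℝ (u x - u y) (x - y) : ℝ)| / ‖x - y‖) ^ p
    / (‖x - y‖₊ : ℝ≥0∞) ^ ((d : ℝ) + s * p)

section ProjKernel

variable {d : ℕ} {s p : ℝ} {u : Euc d → Euc d}

theorem xSemiP_eq_projKernel (D : Set (Euc d)) :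
    xSemiP d s p D u = ∫⁻ x in D, ∫⁻ y in D, projKernel d s p u x y := rfl

theorem projKernel_comm (x y : Euc d) : projKernel d s p u x y = projKernel d s p u y x := by
  rw [projKernel, projKernel, ← neg_sub (u x), ← neg_sub x, inner_neg_neg, norm_neg, nnnorm_neg]

theorem measurable_projKernel (hu : Continuous u) : Measurable (uncurry (projKernel d s p u)) := by
  unfold projKernel uncurry
  fun_prop

theorem projKernel_le_of_eq_zero (hp : 0 ≤ p) {x y : Euc d} (hy : u y = 0) :
    projKernel d s p u x y ≤ ‖u x‖ₑ ^ p * ‖x - y‖ₑ ^ (-((d : ℝ) + s * p)) := by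
  have hproj : |inner ℝ (u x) (x - y)| / ‖x - y‖ ≤ ‖u x‖ :=
    div_le_of_le_mul₀ (norm_nonneg _) (norm_nonneg _) (abs_real_inner_le_norm _ _)
  rw [projKernel, hy, sub_zero, ENNReal.rpow_neg, ← div_eq_mul_inv, enorm_eq_nnnorm (x - y)]
  gcongr
  exact (ENNReal.ofReal_le_ofReal hproj).trans_eq (ofReal_norm _)

theorem projKernel_eq_zero (hp : 0 < p) {x y : Euc d} (hx : u x = 0) (hy : u y = 0) :
    projKernel d s p u x y = 0 := by
  simp [projKernel, hx, hy, hp]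

theorem xSemiP_univ_eq (hp : 0 < p) (hu : Continuous u) {D : Set (Euc d)} (hD : MeasurableSet D)
    (hu0 : ∀ x ∉ D, u x = 0) :
    xSemiP d s p univ u = xSemiP d s p D u + 2 * ∫⁻ x in D, ∫⁻ y in Dᶜ, projKernel d s p u x y := by
  rw [xSemiP_eq_projKernel, Measure.restrict_univ, xSemiP_eq_projKernel]
  exact lintegral_lintegral_eq_add_two_mul_of_symm (measurable_projKernel hu) projKernel_comm hD
    fun x hx y hy => projKernel_eq_zero hp (hu0 x hx) (hu0 y hy)

theorem lintegral_compl_projKernel_le (hp : 0 < p) {D : Set (Euc d)} (hD : IsOpen D)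
    (hDc : Dᶜ.Nonempty) (hu0 : ∀ x ∉ D, u x = 0) {x : Euc d} (hx : x ∈ D) :
    ∫⁻ y in Dᶜ, projKernel d s p u x y ≤
      (∫⁻ z in (ball (0 : Euc d) 1)ᶜ, ‖z‖ₑ ^ (-((d : ℝ) + s * p))) *
        ((‖u x‖₊ : ℝ≥0∞) ^ p / ENNReal.ofReal (infDist x Dᶜ ^ (s * p))) := by
  set δ := infDist x Dᶜ
  have hδ : 0 < δ := (hD.isClosed_compl.notMem_iff_infDist_pos hDc).mp (not_not_intro hx)
  have hsub : Dᶜ ⊆ (ball x δ)ᶜ := fun y hy => by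
    simpa [dist_comm] using infDist_le_dist_of_mem (x := x) hy
  calc ∫⁻ y in Dᶜ, projKernel d s p u x y
      ≤ ∫⁻ y in Dᶜ, ‖u x‖ₑ ^ p * ‖x - y‖ₑ ^ (-((d : ℝ) + s * p)) :=
        setLIntegral_mono' hD.isClosed_compl.measurableSet
          fun y hy => projKernel_le_of_eq_zero hp.le (hu0 y hy)
    _ = ‖u x‖ₑ ^ p * ∫⁻ y in Dᶜ, ‖x - y‖ₑ ^ (-((d : ℝ) + s * p)) :=
        lintegral_const_mul' _ _ (by simp [hp.le])
    _ ≤ ‖u x‖ₑ ^ p * ∫⁻ y in (ball x δ)ᶜ, ‖x - y‖ₑ ^ (-((d : ℝ) + s * p)) := by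
        gcongr
    _ = _ := by
        rw [lintegral_compl_ball_enorm_sub_rpow_neg volume x hδ, finrank_euclideanSpace_fin,
          sub_add_cancel_left, ENNReal.rpow_neg, ENNReal.ofReal_rpow_of_pos hδ, enorm_eq_nnnorm,
          div_eq_mul_inv]
        ring

theorem xSemiP_univ_le (hp : 0 < p) {D : Set (Euc d)} (hD : IsOpen D) (hDc : Dᶜ.Nonempty)
    (hu : u ∈ C1c d D) {cH : ℝ}
    (hardy : ∫⁻ x in D, (‖u x‖₊ : ℝ≥0∞) ^ p / ENNReal.ofReal (infDist x Dᶜ ^ (s * p))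
      ≤ ENNReal.ofReal cH * xSemiP d s p D u) :
    xSemiP d s p univ u ≤
      (1 + 2 * (∫⁻ z in (ball (0 : Euc d) 1)ᶜ, ‖z‖ₑ ^ (-((d : ℝ) + s * p))) * ENNReal.ofReal cH) *
        xSemiP d s p D u := by
  set K := ∫⁻ z in (ball (0 : Euc d) 1)ᶜ, ‖z‖ₑ ^ (-((d : ℝ) + s * p))
  have hcont : Continuous u := hu.1.continuous
  have hu0 : ∀ x ∉ D, u x = 0 := fun x hx =>
    image_eq_zero_of_notMem_tsupport fun h => hx (hu.2.2 h)
  have hweight :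
      Measurable fun x => (‖u x‖₊ : ℝ≥0∞) ^ p / ENNReal.ofReal (infDist x Dᶜ ^ (s * p)) := by
    fun_prop
  have hcross : ∫⁻ x in D, ∫⁻ y in Dᶜ, projKernel d s p u x y ≤
      K * (ENNReal.ofReal cH * xSemiP d s p D u) :=
    calc ∫⁻ x in D, ∫⁻ y in Dᶜ, projKernel d s p u x y
        ≤ ∫⁻ x in D, K * ((‖u x‖₊ : ℝ≥0∞) ^ p / ENNReal.ofReal (infDist x Dᶜ ^ (s * p))) :=
          setLIntegral_mono' hD.measurableSet
            fun x hx => lintegral_compl_projKernel_le hp hD hDc hu0 hx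
      _ = K * ∫⁻ x in D, (‖u x‖₊ : ℝ≥0∞) ^ p / ENNReal.ofReal (infDist x Dᶜ ^ (s * p)) :=
          lintegral_const_mul K hweight
      _ ≤ K * (ENNReal.ofReal cH * xSemiP d s p D u) := by gcongr
  calc xSemiP d s p univ u
      = xSemiP d s p D u + 2 * ∫⁻ x in D, ∫⁻ y in Dᶜ, projKernel d s p u x y :=
        xSemiP_univ_eq hp hcont hD.measurableSet hu0
    _ ≤ xSemiP d s p D u + 2 * (K * (ENNReal.ofReal cH * xSemiP d s p D u)) := by gcongr
    _ = (1 + 2 * K * ENNReal.ofReal cH) * xSemiP d s p D u := by ring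

end ProjKernel

theorem wSemiP_mono {d : ℕ} {s p : ℝ} {u : Euc d → Euc d} {D D' : Set (Euc d)} (h : D ⊆ D') :
    wSemiP d s p D u ≤ wSemiP d s p D' u :=
  (lintegral_mono fun _ => lintegral_mono_set h).trans (lintegral_mono_set h)

theorem rpow_le_ofReal_mul_rpow {a b M : ℝ≥0∞} {q : ℝ} (hM : M ≠ ⊤) (hq : 0 < q)
    (h : b ≠ ⊤ → a ≤ M * b) : a ^ q ≤ ENNReal.ofReal (max 1 (M ^ q).toReal) * b ^ q := by
  rcases eq_or_ne b ⊤ with rfl | hb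
  · rw [ENNReal.top_rpow_of_pos hq, ENNReal.mul_top (by simp)]
    exact le_top
  calc a ^ q ≤ (M * b) ^ q := ENNReal.rpow_le_rpow (h hb) hq.le
    _ = M ^ q * b ^ q := ENNReal.mul_rpow_of_nonneg _ _ hq.le
    _ ≤ ENNReal.ofReal (max 1 (M ^ q).toReal) * b ^ q := by
        gcongr
        exact (ENNReal.le_ofReal_iff_toReal_le (ENNReal.rpow_ne_top_of_nonneg hq.le hM)
          (zero_le_one.trans (le_max_left _ _))).mpr (le_max_right _ _)

theorem stmt12_general (d : ℕ) (p s : ℝ) (hp : 1 < p) (hs0 : 0 < s)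
    (D : Set (Euc d)) (hD : IsOpen D) (hDc : Dᶜ.Nonempty) (cH CK : ℝ)
    (hHardy : ∀ u ∈ C1c d D,
      (∫⁻ x in D, (‖u x‖₊ : ℝ≥0∞) ^ p / ENNReal.ofReal (Metric.infDist x Dᶜ ^ (s * p)))
        ≤ ENNReal.ofReal cH * xSemiP d s p D u)
    (hKorn : ∀ v : Euc d → Euc d, Measurable v → HasCompactSupport v →
      xSemiP d s p Set.univ v ≠ ⊤ →
      wSemiP d s p Set.univ v ≤ ENNReal.ofReal CK * xSemiP d s p Set.univ v) :
    ∃ C : ℝ, 1 ≤ C ∧ ∀ u ∈ C1c d D,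
      wSemiP d s p D u ^ (1 / p) ≤ ENNReal.ofReal C * xSemiP d s p D u ^ (1 / p) := by
  have hp0 : 0 < p := by linarith
  set K := ∫⁻ z in (ball (0 : Euc d) 1)ᶜ, ‖z‖ₑ ^ (-((d : ℝ) + s * p))
  have hK : K ≠ ⊤ :=
    (lintegral_compl_ball_one_enorm_rpow_neg_lt_top volume (by simp; positivity)).ne
  set M := ENNReal.ofReal CK * (1 + 2 * K * ENNReal.ofReal cH)
  have hM : M ≠ ⊤ := by finiteness
  refine ⟨max 1 (M ^ (1 / p)).toReal, le_max_left _ _, fun u hu =>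
    rpow_le_ofReal_mul_rpow hM (by positivity) fun hX => ?_⟩
  have hXuniv := xSemiP_univ_le hp0 hD hDc hu (hHardy u hu)
  calc wSemiP d s p D u ≤ wSemiP d s p univ u := wSemiP_mono (subset_univ D)
    _ ≤ ENNReal.ofReal CK * xSemiP d s p univ u :=
        hKorn u hu.1.continuous.measurable hu.2.1 (ne_top_of_le_ne_top (by finiteness) hXuniv)
    _ ≤ ENNReal.ofReal CK * ((1 + 2 * K * ENNReal.ofReal cH) * xSemiP d s p D u) := by gcongr
    _ = M * xSemiP d s p D u := (mul_assoc _ _ _).symm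

theorem stmt12 (d : ℕ) (hd : 1 < d) (p s : ℝ) (hp : 1 < p) (hs0 : 0 < s) (hs1 : s < 1)
    (D : Set (Euc d)) (hD : IsOpen D) (hDc : Dᶜ.Nonempty) (cH CK : ℝ)
    (hHardy : ∀ u ∈ C1c d D,
      (∫⁻ x in D, (‖u x‖₊ : ℝ≥0∞) ^ p / ENNReal.ofReal (Metric.infDist x Dᶜ ^ (s * p)))
        ≤ ENNReal.ofReal cH * xSemiP d s p D u)
    (hKorn : ∀ v : Euc d → Euc d, Measurable v → HasCompactSupport v →
      xSemiP d s p Set.univ v ≠ ⊤ →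
      wSemiP d s p Set.univ v ≤ ENNReal.ofReal CK * xSemiP d s p Set.univ v) :
    ∃ C : ℝ, 1 ≤ C ∧ ∀ u ∈ C1c d D,
      wSemiP d s p D u ^ (1 / p) ≤ ENNReal.ofReal C * xSemiP d s p D u ^ (1 / p) :=
  stmt12_general d p s hp hs0 D hD hDc cH CK hHardy hKorn
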